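/- Let x₀ ∈ ℂⁿ and let Ψ be holomorphic on an open neighborhood of (x₀, conj x₀) in ℂⁿ × ℂⁿ such that the ℂ-bilinear form (ξ,η) ↦ D²Ψ(x₀, conj x₀)((ξ,0),(0,η)) is nondegenerate. Define φ(y, x̃; x, ỹ) := Ψ(x, ỹ) − Ψ(x, x̃) − Ψ(y, ỹ) + Ψ(y, x̃) for (x,ỹ), (x,x̃), (y,ỹ), (y,x̃) in the domain of Ψ. Then the second complex Fréchet derivative in the variables (x, ỹ) of φ, evaluated at y = x = x₀ and x̃ = ỹ = conj x₀, is a nondegenerate ℂ-bilinear form on ℂⁿ × ℂⁿ ≅ ℂ^{2n}. -/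

import Mathlib

/-!
The Hessian of `φ` in `(x, ỹ)` is the Hessian `A` of `Ψ` with its two diagonal blocks removed,
since the subtracted terms `Ψ(x, x̃)` and `Ψ(y, ỹ)` depend on one block of variables only. By the
symmetry of `A`, what is left is `(v, w) ↦ B(v₁, w₂) + B(w₁, v₂)` with `B` the mixed block, and
this is nondegenerate as soon as `B` is: pairing `v` with `(0, η)` gives `v₁ = 0`, pairing with
`(ξ, 0)` gives `v₂ = 0`, since a bilinear form on spaces of equal finite dimension that is
nondegenerate in its first argument is nondegenerate in its second.
-/

open Complex

noncomputable section

/-- `ℂⁿ` with its Euclidean (Hermitian) norm. -/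
abbrev En (n : ℕ) := EuclideanSpace ℂ (Fin n)

/-- Componentwise complex conjugation on `ℂⁿ`. -/
def conjV (n : ℕ) (x : En n) : En n :=
  (WithLp.equiv 2 (Fin n → ℂ)).symm fun j => (starRingEnd ℂ) (x j)

/-- The phase `φ(y, x̃; x, ỹ) = Ψ(x,ỹ) − Ψ(x,x̃) − Ψ(y,ỹ) + Ψ(y,x̃)`. -/
def phiF (n : ℕ) (Ψ : En n × En n → ℂ) (y xt x yt : En n) : ℂ :=
  Ψ (x, yt) - Ψ (x, xt) - Ψ (y, yt) + Ψ (y, xt)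

open Filter Topology Function Module ContinuousLinearMap

section LinearAlgebra

variable {K V₁ V₂ : Type*} [Field K] [AddCommGroup V₁] [Module K V₁] [FiniteDimensional K V₁]
  [AddCommGroup V₂] [Module K V₂] [FiniteDimensional K V₂]

theorem LinearMap.injective_flip_of_finrank_eq {B : V₁ →ₗ[K] V₂ →ₗ[K] K} (hB : Injective B)
    (hdim : finrank K V₁ = finrank K V₂) : Injective B.flip :=
  LinearMap.flip_injective_iff₂.mpr <|
    (LinearMap.injective_iff_surjective_of_finrank_eq_finrank
      (hdim.trans Subspace.dual_finrank_eq.symm)).mp hB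

theorem LinearMap.prod_eq_zero_of_forall_apply_add_apply_eq_zero {B : V₁ →ₗ[K] V₂ →ₗ[K] K}
    (hB : Injective B) (hdim : finrank K V₁ = finrank K V₂) {v : V₁ × V₂}
    (hv : ∀ w : V₁ × V₂, B v.1 w.2 + B w.1 v.2 = 0) : v = 0 := by
  have hv₁ : v.1 = 0 := hB <| LinearMap.ext fun η => by simpa using hv (0, η)
  have hv₂ : v.2 = 0 := LinearMap.injective_flip_of_finrank_eq hB hdim <|
    LinearMap.ext fun ξ => by simpa using hv (ξ, 0)
  exact Prod.ext hv₁ hv₂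

end LinearAlgebra

section SecondDerivative

variable {𝕜 : Type*} [NontriviallyNormedField 𝕜] {E F G : Type*}
  [NormedAddCommGroup E] [NormedSpace 𝕜 E] [NormedAddCommGroup F] [NormedSpace 𝕜 F]
  [NormedAddCommGroup G] [NormedSpace 𝕜 G]

theorem ContinuousLinearMap.apply_apply_eq_sum_blocks (A : E × F →L[𝕜] E × F →L[𝕜] G)
    (v w : E × F) :
    A v w = A (v.1, 0) (w.1, 0) + A (v.1, 0) (0, w.2) + A (0, v.2) (w.1, 0) +
      A (0, v.2) (0, w.2) := by
  have hsplit : ∀ u : E × F, u = (u.1, 0) + (0, u.2) := fun u => by simp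
  conv_lhs => rw [hsplit v, hsplit w]
  simp only [map_add, add_apply]
  abel

theorem fderiv_fderiv_eq_of_eventually_hasFDerivAt {f : E → G} {f' : E → E →L[𝕜] G}
    {f'' : E →L[𝕜] E →L[𝕜] G} {x : E} (hf : ∀ᶠ y in 𝓝 x, HasFDerivAt f (f' y) y)
    (hf' : HasFDerivAt f' f'' x) : fderiv 𝕜 (fderiv 𝕜 f) x = f'' :=
  (EventuallyEq.fderiv_eq (hf.mono fun _ hy => hy.fderiv)).trans hf'.fderiv

variable {ι : F → E} {L : F →L[𝕜] E} {h : E → G} {h' : E → E →L[𝕜] G} {x : F}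

theorem eventually_hasFDerivAt_comp_of_hasFDerivAt_const (hι : ∀ y, HasFDerivAt ι L y)
    (hh : ∀ᶠ z in 𝓝 (ι x), HasFDerivAt h (h' z) z) :
    ∀ᶠ y in 𝓝 x, HasFDerivAt (h ∘ ι) ((h' (ι y)).comp L) y :=
  ((hι x).continuousAt.tendsto.eventually hh).mono fun y hy => hy.comp y (hι y)

theorem hasFDerivAt_comp_right_of_hasFDerivAt_const (hι : ∀ y, HasFDerivAt ι L y)
    {h'' : E →L[𝕜] E →L[𝕜] G} (hh' : HasFDerivAt h' h'' (ι x)) :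
    HasFDerivAt (fun y => (h' (ι y)).comp L) (((compL 𝕜 F E G).flip L).comp (h''.comp L)) x :=
  ((compL 𝕜 F E G).flip L).hasFDerivAt.comp x (hh'.comp x (hι x))

theorem fderiv_fderiv_mixed_difference_apply {Ψ : E × F → G} {Ψ' : E × F → E × F →L[𝕜] G}
    {A : E × F →L[𝕜] E × F →L[𝕜] G} {a : E} {b : F}
    (hΨ : ∀ᶠ p in 𝓝 (a, b), HasFDerivAt Ψ (Ψ' p) p) (hΨ' : HasFDerivAt Ψ' A (a, b))
    (v w : E × F) :
    fderiv 𝕜 (fderiv 𝕜 fun p : E × F => Ψ p - Ψ (p.1, b) - Ψ (a, p.2) + Ψ (a, b)) (a, b) v w =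
      A (v.1, 0) (0, w.2) + A (0, v.2) (w.1, 0) := by
  set P₁ : E × F →L[𝕜] E × F := (fst 𝕜 E F).prod 0
  set P₂ : E × F →L[𝕜] E × F := (0 : E × F →L[𝕜] E).prod (snd 𝕜 E F)
  have hι₁ : ∀ p : E × F, HasFDerivAt (fun p : E × F => (p.1, b)) P₁ p := fun p =>
    hasFDerivAt_fst.prodMk (hasFDerivAt_const b p)
  have hι₂ : ∀ p : E × F, HasFDerivAt (fun p : E × F => (a, p.2)) P₂ p := fun p =>
    (hasFDerivAt_const a p).prodMk hasFDerivAt_snd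
  have hφ : ∀ᶠ p in 𝓝 (a, b),
      HasFDerivAt (fun p : E × F => Ψ p - Ψ (p.1, b) - Ψ (a, p.2) + Ψ (a, b))
      (Ψ' p - (Ψ' (p.1, b)).comp P₁ - (Ψ' (a, p.2)).comp P₂) p := by
    filter_upwards [hΨ, eventually_hasFDerivAt_comp_of_hasFDerivAt_const hι₁ hΨ,
      eventually_hasFDerivAt_comp_of_hasFDerivAt_const hι₂ hΨ] with p h₀ h₁ h₂
    exact ((h₀.sub h₁).sub h₂).add_const _
  have hφ' := (hΨ'.sub (hasFDerivAt_comp_right_of_hasFDerivAt_const hι₁ hΨ')).sub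
    (hasFDerivAt_comp_right_of_hasFDerivAt_const hι₂ hΨ')
  rw [fderiv_fderiv_eq_of_eventually_hasFDerivAt hφ hφ']
  change A v w - A (v.1, 0) (w.1, 0) - A (0, v.2) (0, w.2) = _
  rw [A.apply_apply_eq_sum_blocks v w]
  abel

end SecondDerivative

/-- if the mixed complex Hessian of `Ψ` at `(x₀, conj x₀)` is nondegenerate,
then the complex Hessian in the variables `(x, ỹ)` of the phase
`φ(y, x̃; x, ỹ) = Ψ(x,ỹ) − Ψ(x,x̃) − Ψ(y,ỹ) + Ψ(y,x̃)`, evaluated at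
`y = x = x₀`, `x̃ = ỹ = conj x₀`, is a nondegenerate `ℂ`-bilinear form on `ℂ^{2n}`. -/
theorem statement9 (n : ℕ)
    (x₀ : En n) (U : Set (En n × En n)) (hU : IsOpen U) (hmem : (x₀, conjV n x₀) ∈ U)
    (Ψ : En n × En n → ℂ) (hΨ : DifferentiableOn ℂ Ψ U)
    (hnd : ∀ ξ : En n,
      (∀ η : En n, fderiv ℂ (fderiv ℂ Ψ) (x₀, conjV n x₀) (ξ, 0) (0, η) = 0) → ξ = 0) :
    ∀ v : En n × En n,
      (∀ w : En n × En n,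
        fderiv ℂ (fderiv ℂ (fun p : En n × En n => phiF n Ψ x₀ (conjV n x₀) p.1 p.2))
          (x₀, conjV n x₀) v w = 0) → v = 0 := by
  intro v hv
  by_cases hA : DifferentiableAt ℂ (fderiv ℂ Ψ) (x₀, conjV n x₀)
  · have hΨ' : ∀ᶠ p in 𝓝 (x₀, conjV n x₀), HasFDerivAt Ψ (fderiv ℂ Ψ p) p := by
      filter_upwards [hU.mem_nhds hmem] with p hp
      exact (hΨ.differentiableAt (hU.mem_nhds hp)).hasFDerivAt
    set A := fderiv ℂ (fderiv ℂ Ψ) (x₀, conjV n x₀)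
    let B : En n →ₗ[ℂ] En n →ₗ[ℂ] ℂ :=
      toLinearMap₁₂ ((A.comp (inl ℂ (En n) (En n))).flip.comp (inr ℂ (En n) (En n))).flip
    have hB : Injective B := (injective_iff_map_eq_zero B).mpr fun ξ hξ =>
      hnd ξ fun η => LinearMap.congr_fun hξ η
    refine LinearMap.prod_eq_zero_of_forall_apply_add_apply_eq_zero hB rfl fun w => ?_
    have hsymm := second_derivative_symmetric_of_eventually hΨ' hA.hasFDerivAt (0, v.2) (w.1, 0)
    calc B v.1 w.2 + B w.1 v.2 = A (v.1, 0) (0, w.2) + A (0, v.2) (w.1, 0) := by rw [hsymm]; rfl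
      _ = 0 := (fderiv_fderiv_mixed_difference_apply hΨ' hA.hasFDerivAt v w).symm.trans (hv w)
  · -- `fderiv` then returns the junk value `0`, and `hnd` forces `ℂⁿ` to be trivial.
    have htriv : ∀ ξ : En n, ξ = 0 := fun ξ =>
      hnd ξ fun η => by simp [fderiv_zero_of_not_differentiableAt hA]
    exact Prod.ext (htriv v.1) (htriv v.2)

end
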